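/- For a function given by a finite orthonormal polynomial chaos expansion f(x) = Σ_𝐢 α_𝐢 Ψ_𝐢(x) over a product measure, the Sobol' index of the variable set S equals σ_S = (Σ_{nz(𝐢) = S} α_𝐢²) / (Σ_{𝐢 ≠ 0} α_𝐢²), i.e., the ANOVA component f_S equals Σ_{nz(𝐢)=S} α_𝐢 Ψ_𝐢 and its variance is Σ_{nz(𝐢)=S} α_𝐢². -/

import Mathlib

/-!
Orthonormality together with `ψ j 0 = 1` makes every non-constant `ψ j k` centred, so integrating
out the coordinates outside `S` kills exactly the basis terms `Ψ_m` with `nz m ⊄ S`: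
`E[f | x_S] = ∑_{nz m ⊆ S} α_m Ψ_m`. Möbius inversion of the ANOVA recursion over the subsets of `S`
leaves the terms with `nz m = S`, and Parseval's identity for the orthonormal tensor basis gives
the variances; the mean of `f` is the case `S = ∅`.
-/

open MeasureTheory

/-- Conditional mean of `f` given the coordinates in `S`, for independent inputs
with marginal measures `ρ j`: integrate out the coordinates not in `S`. -/
noncomputable def condMean {d : ℕ} (ρ : Fin d → Measure ℝ) (f : (Fin d → ℝ) → ℝ)
    (S : Finset (Fin d)) (x : Fin d → ℝ) : ℝ :=
  ∫ y, f (fun i => if i ∈ S then x i else y i) ∂(Measure.pi ρ)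

/-- ANOVA (Sobol') component: `f_S(x) = E[f | x_S] - ∑_{T ⊊ S} f_T(x)`. -/
noncomputable def anova {d : ℕ} (ρ : Fin d → Measure ℝ) (f : (Fin d → ℝ) → ℝ)
    (S : Finset (Fin d)) (x : Fin d → ℝ) : ℝ :=
  condMean ρ f S x - ∑ T ∈ S.ssubsets.attach, anova ρ f T.1 x
termination_by S.card
decreasing_by exact Finset.card_lt_card (Finset.mem_ssubsets.mp T.2)

/-- The uniform probability measure on `[0,1]`. -/
noncomputable def unif01 : Measure ℝ := (volume : Measure ℝ).restrict (Set.Icc 0 1)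

open Finset

section Orthonormal

variable {X : Type*} [MeasurableSpace X] {μ : Measure X}

theorem integral_eq_zero_of_orthonormal {e : ℕ → X → ℝ}
    (horth : ∀ k l, ∫ x, e k x * e l x ∂μ = if k = l then 1 else 0) (hzero : ∀ x, e 0 x = 1)
    {k : ℕ} (hk : k ≠ 0) : ∫ x, e k x ∂μ = 0 := by
  simpa [hzero, hk] using horth k 0

theorem integral_sq_sum_of_orthonormal {ι : Type*} [DecidableEq ι] {e : ι → X → ℝ}
    (horth : ∀ i j, ∫ x, e i x * e j x ∂μ = if i = j then 1 else 0)
    (hint : ∀ i j, Integrable (fun x => e i x * e j x) μ) (s : Finset ι) (c : ι → ℝ) :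
    ∫ x, (∑ i ∈ s, c i * e i x) ^ 2 ∂μ = ∑ i ∈ s, c i ^ 2 := by
  have hexpand : ∀ x, (∑ i ∈ s, c i * e i x) ^ 2
      = ∑ i ∈ s, ∑ j ∈ s, c i * c j * (e i x * e j x) := fun x => by
    rw [sq, sum_mul_sum]
    exact sum_congr rfl fun i _ => sum_congr rfl fun j _ => by ring
  simp_rw [hexpand]
  rw [integral_finsetSum _ fun i _ => integrable_finsetSum _ fun j _ => (hint i j).const_mul _]
  refine sum_congr rfl fun i hi => ?_
  rw [integral_finsetSum _ fun j _ => (hint i j).const_mul _]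
  simp_rw [integral_const_mul, horth, mul_ite, mul_one, mul_zero, sum_ite_eq, if_pos hi, sq]

end Orthonormal

section TensorBasis

variable {ι : Type*} [Fintype ι] {ρ : ι → Measure ℝ} {ψ : ι → ℕ → ℝ → ℝ}

def tensorBasis (ψ : ι → ℕ → ℝ → ℝ) (m : ι → ℕ) (x : ι → ℝ) : ℝ := ∏ j, ψ j (m j) (x j)

def nz (m : ι → ℕ) : Finset ι := univ.filter fun j => m j ≠ 0

theorem nz_eq_empty_iff {m : ι → ℕ} : nz m = ∅ ↔ m = 0 := by
  simp [nz, filter_eq_empty_iff, funext_iff]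

theorem tensorBasis_mul_tensorBasis (m n : ι → ℕ) (x : ι → ℝ) :
    tensorBasis ψ m x * tensorBasis ψ n x = ∏ j, ψ j (m j) (x j) * ψ j (n j) (x j) :=
  prod_mul_distrib.symm

theorem integral_tensorBasis_mul_tensorBasis [∀ j, SigmaFinite (ρ j)] [DecidableEq ι]
    (horth : ∀ j k l, ∫ t, ψ j k t * ψ j l t ∂(ρ j) = if k = l then 1 else 0) (m n : ι → ℕ) :
    ∫ x, tensorBasis ψ m x * tensorBasis ψ n x ∂(Measure.pi ρ) = if m = n then 1 else 0 := by
  simp_rw [tensorBasis_mul_tensorBasis, integral_fintype_prod_eq_prod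
    (fun j t => ψ j (m j) t * ψ j (n j) t), horth, prod_boole, funext_iff, mem_univ, true_imp_iff]

theorem integrable_tensorBasis_mul_tensorBasis [∀ j, SigmaFinite (ρ j)]
    (hL2 : ∀ j k, MemLp (ψ j k) 2 (ρ j)) (m n : ι → ℕ) :
    Integrable (fun x => tensorBasis ψ m x * tensorBasis ψ n x) (Measure.pi ρ) := by
  simp_rw [tensorBasis_mul_tensorBasis]
  exact Integrable.fintype_prod fun j => (hL2 j (m j)).integrable_mul (hL2 j (n j))

theorem integral_sq_sum_tensorBasis [∀ j, SigmaFinite (ρ j)] [DecidableEq ι]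
    (horth : ∀ j k l, ∫ t, ψ j k t * ψ j l t ∂(ρ j) = if k = l then 1 else 0)
    (hL2 : ∀ j k, MemLp (ψ j k) 2 (ρ j)) (s : Finset (ι → ℕ)) (α : (ι → ℕ) → ℝ) :
    ∫ x, (∑ m ∈ s, α m * tensorBasis ψ m x) ^ 2 ∂(Measure.pi ρ) = ∑ m ∈ s, α m ^ 2 :=
  integral_sq_sum_of_orthonormal (integral_tensorBasis_mul_tensorBasis horth)
    (integrable_tensorBasis_mul_tensorBasis hL2) s α

end TensorBasis

theorem condMean_empty {d : ℕ} (ρ : Fin d → Measure ℝ) (f : (Fin d → ℝ) → ℝ) (x : Fin d → ℝ) :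
    condMean ρ f ∅ x = ∫ y, f y ∂(Measure.pi ρ) := by
  simp [condMean]

theorem anova_eq_of_condMean_eq_sum_powerset {d : ℕ} {ρ : Fin d → Measure ℝ}
    {f : (Fin d → ℝ) → ℝ} {x : Fin d → ℝ} {g : Finset (Fin d) → ℝ}
    (h : ∀ S, condMean ρ f S x = ∑ T ∈ S.powerset, g T) (S : Finset (Fin d)) :
    anova ρ f S x = g S := by
  induction S using Finset.strongInduction with
  | _ S ih =>
    rw [anova, sum_attach S.ssubsets (fun T => anova ρ f T x), h S,
      sum_congr rfl fun T hT => ih T (mem_ssubsets.mp hT), ssubsets,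
      ← add_sum_erase _ _ (mem_powerset_self S), add_sub_cancel_right]

section Chaos

variable {d : ℕ} {ρ : Fin d → Measure ℝ} [∀ j, IsProbabilityMeasure (ρ j)] {ψ : Fin d → ℕ → ℝ → ℝ}

theorem condMean_tensorBasis (hmean : ∀ j k, k ≠ 0 → ∫ t, ψ j k t ∂(ρ j) = 0)
    (hzero : ∀ j t, ψ j 0 t = 1) (m : Fin d → ℕ) (S : Finset (Fin d)) (x : Fin d → ℝ) :
    condMean ρ (tensorBasis ψ m) S x = if nz m ⊆ S then tensorBasis ψ m x else 0 := by
  have hfactor : ∀ j, ∫ t, ψ j (m j) (if j ∈ S then x j else t) ∂(ρ j)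
      = if j ∈ S ∨ m j = 0 then ψ j (m j) (x j) else 0 := by
    intro j
    by_cases hj : j ∈ S
    · simp [hj]
    by_cases hm : m j = 0
    · simp [hj, hm, hzero]
    · simp [hj, hm, hmean j _ hm]
  calc condMean ρ (tensorBasis ψ m) S x
      = ∏ j, ∫ t, ψ j (m j) (if j ∈ S then x j else t) ∂(ρ j) :=
        integral_fintype_prod_eq_prod fun j t => ψ j (m j) (if j ∈ S then x j else t)
    _ = _ := by
        simp_rw [hfactor, prod_ite_zero]
        simp [nz, tensorBasis, subset_iff, or_iff_not_imp_left, not_imp_comm]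

variable {I : Finset (Fin d → ℕ)} {α : (Fin d → ℕ) → ℝ} {f : (Fin d → ℝ) → ℝ}

theorem condMean_chaos (hint : ∀ j k, Integrable (ψ j k) (ρ j))
    (hmean : ∀ j k, k ≠ 0 → ∫ t, ψ j k t ∂(ρ j) = 0) (hzero : ∀ j t, ψ j 0 t = 1)
    (hf : ∀ x, f x = ∑ m ∈ I, α m * tensorBasis ψ m x) (S : Finset (Fin d)) (x : Fin d → ℝ) :
    condMean ρ f S x = ∑ m ∈ I with nz m ⊆ S, α m * tensorBasis ψ m x := by
  have hint_slice : ∀ m, Integrable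
      (fun y => tensorBasis ψ m fun j => if j ∈ S then x j else y j) (Measure.pi ρ) := fun m =>
    Integrable.fintype_prod (f := fun j t => ψ j (m j) (if j ∈ S then x j else t)) fun j => by
      by_cases hj : j ∈ S
      · simp [hj]
      · simpa [hj] using hint j (m j)
  calc condMean ρ f S x = ∑ m ∈ I, α m * condMean ρ (tensorBasis ψ m) S x := by
        simp only [condMean, hf]
        rw [integral_finsetSum _ fun m _ => (hint_slice m).const_mul _]
        simp_rw [integral_const_mul]
    _ = _ := by simp_rw [condMean_tensorBasis hmean hzero, mul_ite, mul_zero, sum_filter]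

theorem anova_chaos (hint : ∀ j k, Integrable (ψ j k) (ρ j))
    (hmean : ∀ j k, k ≠ 0 → ∫ t, ψ j k t ∂(ρ j) = 0) (hzero : ∀ j t, ψ j 0 t = 1)
    (hf : ∀ x, f x = ∑ m ∈ I, α m * tensorBasis ψ m x) (S : Finset (Fin d)) (x : Fin d → ℝ) :
    anova ρ f S x = ∑ m ∈ I with nz m = S, α m * tensorBasis ψ m x := by
  refine anova_eq_of_condMean_eq_sum_powerset
    (g := fun T => ∑ m ∈ I with nz m = T, α m * tensorBasis ψ m x) (fun S => ?_) S
  rw [condMean_chaos hint hmean hzero hf, ← sum_fiberwise_of_maps_to (t := S.powerset) (g := nz)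
    fun m hm => mem_powerset.mpr (mem_filter.mp hm).2]
  refine sum_congr rfl fun T hT => ?_
  rw [filter_filter]
  congr 1
  exact filter_congr fun m _ => ⟨And.right, fun h => ⟨h ▸ mem_powerset.mp hT, h⟩⟩

theorem chaos_sub_integral (hint : ∀ j k, Integrable (ψ j k) (ρ j))
    (hmean : ∀ j k, k ≠ 0 → ∫ t, ψ j k t ∂(ρ j) = 0) (hzero : ∀ j t, ψ j 0 t = 1)
    (hf : ∀ x, f x = ∑ m ∈ I, α m * tensorBasis ψ m x) (x : Fin d → ℝ) :
    f x - ∫ y, f y ∂(Measure.pi ρ) = ∑ m ∈ I with m ≠ 0, α m * tensorBasis ψ m x := by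
  rw [← condMean_empty ρ f x, condMean_chaos hint hmean hzero hf, hf x,
    ← sum_filter_add_sum_filter_not I (fun m => nz m ⊆ ∅), add_sub_cancel_left]
  simp_rw [subset_empty, nz_eq_empty_iff]

end Chaos

theorem sobol_index_PCE_general {d : ℕ} (ρ : Fin d → Measure ℝ) [∀ j, IsProbabilityMeasure (ρ j)]
    (ψ : Fin d → ℕ → ℝ → ℝ)
    (horth : ∀ j k l, ∫ t, ψ j k t * ψ j l t ∂(ρ j) = if k = l then 1 else 0)
    (hint : ∀ j k, Integrable (ψ j k) (ρ j))
    (hL2 : ∀ j k, MemLp (ψ j k) 2 (ρ j))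
    (hzero : ∀ j t, ψ j 0 t = 1)
    (I : Finset (Fin d → ℕ)) (α : (Fin d → ℕ) → ℝ)
    (f : (Fin d → ℝ) → ℝ)
    (hf : ∀ x, f x = ∑ m ∈ I, α m * ∏ j, ψ j (m j) (x j))
    (S : Finset (Fin d)) :
    (∀ x, anova ρ f S x
        = ∑ m ∈ I.filter (fun m => (Finset.univ.filter fun j => m j ≠ 0) = S),
            α m * ∏ j, ψ j (m j) (x j)) ∧
    (∫ x, (anova ρ f S x) ^ 2 ∂(Measure.pi ρ)
        = ∑ m ∈ I.filter (fun m => (Finset.univ.filter fun j => m j ≠ 0) = S),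
            (α m) ^ 2) ∧
    ((∫ x, (anova ρ f S x) ^ 2 ∂(Measure.pi ρ))
          / (∫ x, (f x - ∫ y, f y ∂(Measure.pi ρ)) ^ 2 ∂(Measure.pi ρ))
        = (∑ m ∈ I.filter (fun m => (Finset.univ.filter fun j => m j ≠ 0) = S), (α m) ^ 2)
          / (∑ m ∈ I.filter (fun m => m ≠ fun _ => 0), (α m) ^ 2)) := by
  have hmean : ∀ j k, k ≠ 0 → ∫ t, ψ j k t ∂(ρ j) = 0 := fun j _ hk =>
    integral_eq_zero_of_orthonormal (horth j) (hzero j) hk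
  have hanova : ∀ x, anova ρ f S x = ∑ m ∈ I with nz m = S, α m * tensorBasis ψ m x :=
    anova_chaos hint hmean hzero hf S
  have hvar_anova : ∫ x, anova ρ f S x ^ 2 ∂(Measure.pi ρ) = ∑ m ∈ I with nz m = S, α m ^ 2 := by
    simp_rw [hanova]
    exact integral_sq_sum_tensorBasis horth hL2 _ α
  have hvar : ∫ x, (f x - ∫ y, f y ∂(Measure.pi ρ)) ^ 2 ∂(Measure.pi ρ)
      = ∑ m ∈ I with m ≠ 0, α m ^ 2 := by
    simp_rw [chaos_sub_integral hint hmean hzero hf]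
    exact integral_sq_sum_tensorBasis horth hL2 _ α
  exact ⟨hanova, hvar_anova, congrArg₂ (· / ·) hvar_anova hvar⟩

/-- for a finite orthonormal polynomial chaos expansion over a product
measure, the ANOVA component for a variable set S consists of exactly the terms with
nz(m) = S, its variance is the corresponding sum of squared coefficients, and the
Sobol' index is the ratio of sums of squared coefficients. -/
theorem sobol_index_PCE {d : ℕ} (ρ : Fin d → Measure ℝ) [∀ j, IsProbabilityMeasure (ρ j)]
    (ψ : Fin d → ℕ → ℝ → ℝ)
    (horth : ∀ j k l, ∫ t, ψ j k t * ψ j l t ∂(ρ j) = if k = l then 1 else 0)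
    (hint : ∀ j k, Integrable (ψ j k) (ρ j))
    (hL2 : ∀ j k, MemLp (ψ j k) 2 (ρ j))
    (hzero : ∀ j t, ψ j 0 t = 1)
    (I : Finset (Fin d → ℕ)) (α : (Fin d → ℕ) → ℝ)
    (f : (Fin d → ℝ) → ℝ)
    (hf : ∀ x, f x = ∑ m ∈ I, α m * ∏ j, ψ j (m j) (x j))
    (S : Finset (Fin d)) (hS : S.Nonempty) :
    (∀ x, anova ρ f S x
        = ∑ m ∈ I.filter (fun m => (Finset.univ.filter fun j => m j ≠ 0) = S),
            α m * ∏ j, ψ j (m j) (x j)) ∧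
    (∫ x, (anova ρ f S x) ^ 2 ∂(Measure.pi ρ)
        = ∑ m ∈ I.filter (fun m => (Finset.univ.filter fun j => m j ≠ 0) = S),
            (α m) ^ 2) ∧
    ((∫ x, (anova ρ f S x) ^ 2 ∂(Measure.pi ρ))
          / (∫ x, (f x - ∫ y, f y ∂(Measure.pi ρ)) ^ 2 ∂(Measure.pi ρ))
        = (∑ m ∈ I.filter (fun m => (Finset.univ.filter fun j => m j ≠ 0) = S), (α m) ^ 2)
          / (∑ m ∈ I.filter (fun m => m ≠ fun _ => 0), (α m) ^ 2)) :=
  sobol_index_PCE_general ρ ψ horth hint hL2 hzero I α f hf S
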